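/- Let G be a commutative group, let n, s ≥ 1, and let {h_{i,j}} (1 ≤ i ≤ n, 1 ≤ j ≤ s) be elements of G such that for every (i_1, …, i_s) ∈ {1, …, n}^s the set {h_{i_1,1}, …, h_{i_s,s}} generates G as a group. Suppose f : G → ℂ and there exist exponential polynomials P_1, …, P_s : G → ℂ such that Δ_{h_{n,k}} ⋯ Δ_{h_{2,k}} Δ_{h_{1,k}} f = P_k for every k = 1, …, s. Then f is an exponential polynomial, i.e. span{τ_h f : h ∈ G} is finite-dimensional over ℂ. -/

import Mathlib

/-!
If `Δ_g u` is an exponential polynomial for every `g` in a finite generating set `S` of `G`, then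
so is `u`: the translates of all `Δ_g u` span a finite-dimensional translation-invariant space `W`,
the `x` with `τ_x u - u ∈ W` form a subgroup containing `S`, hence all of `G`, and so every
translate of `u` lies in `W + ℂ u`. For the theorem, induct on the total number of differences:
if no family of differences is empty, one step from each family already generates `G`, and for
every step `g` of the `k`-th family, `Δ_g f` satisfies the hypotheses with that step removed from the
`k`-th family, since `Δ_g` commutes with the other differences and preserves exponential
polynomials.
-/

noncomputable section

/-- Forward difference operator: `Δ_h f x = f (x + h) - f x`. -/
def fwdDiffOp {G M : Type*} [AddCommGroup G] [AddCommGroup M] (h : G) (f : G → M) : G → M :=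
  fun x => f (x + h) - f x

/-- Mixed differences along a list of steps; the head of the list is applied outermost,
so `mixedDiff [g_m, …, g_1] f = Δ_{g_m} ⋯ Δ_{g_1} f`. -/
def mixedDiff {G M : Type*} [AddCommGroup G] [AddCommGroup M] : List G → (G → M) → (G → M)
  | [], f => f
  | h :: t, f => fwdDiffOp h (mixedDiff t f)

/-- Translation operator: `τ_h f x = f (x + h)`. -/
def transOp {G M : Type*} [AddCommGroup G] (h : G) (f : G → M) : G → M :=
  fun x => f (x + h)

/-- The span of all translates of `g`. -/
def tauSpan {G : Type*} [AddCommGroup G] (g : G → ℂ) : Submodule ℂ (G → ℂ) :=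
  Submodule.span ℂ (Set.range fun h : G => transOp h g)

/-- `f` is an exponential polynomial iff the span of its translates is finite dimensional. -/
def IsExpPoly {G : Type*} [AddCommGroup G] (f : G → ℂ) : Prop :=
  FiniteDimensional ℂ (tauSpan f)

section Translation

variable {G : Type*} [AddCommGroup G]

lemma transOp_transOp {M : Type*} (x y : G) (f : G → M) :
    transOp x (transOp y f) = transOp (x + y) f :=
  funext fun z => by simp only [transOp, add_assoc]

lemma transOp_zero {M : Type*} (f : G → M) : transOp (0 : G) f = f :=
  funext fun z => by simp only [transOp, add_zero]

lemma transOp_sub_self {M : Type*} [AddCommGroup M] (g : G) (f : G → M) :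
    transOp g f - f = fwdDiffOp g f :=
  rfl

def translation (x : G) : (G → ℂ) →ₗ[ℂ] (G → ℂ) where
  toFun := transOp x
  map_add' _ _ := rfl
  map_smul' _ _ := rfl

lemma translation_apply (x : G) (f : G → ℂ) : translation x f = transOp x f :=
  rfl

lemma transOp_mem_tauSpan (x : G) (f : G → ℂ) : transOp x f ∈ tauSpan f :=
  Submodule.subset_span ⟨x, rfl⟩

lemma self_mem_tauSpan (f : G → ℂ) : f ∈ tauSpan f := by
  simpa only [transOp_zero] using transOp_mem_tauSpan (0 : G) f

def IsTranslationInvariant (W : Submodule ℂ (G → ℂ)) : Prop :=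
  ∀ x : G, W ≤ W.comap (translation x)

lemma isTranslationInvariant_tauSpan (f : G → ℂ) : IsTranslationInvariant (tauSpan f) := by
  intro x
  rw [tauSpan, Submodule.span_le]
  rintro _ ⟨y, rfl⟩
  rw [SetLike.mem_coe, Submodule.mem_comap, translation_apply, transOp_transOp]
  exact transOp_mem_tauSpan (x + y) f

lemma IsTranslationInvariant.iSup {ι : Sort*} {W : ι → Submodule ℂ (G → ℂ)}
    (hW : ∀ i, IsTranslationInvariant (W i)) : IsTranslationInvariant (⨆ i, W i) :=
  fun x => iSup_le fun i => (hW i x).trans (Submodule.comap_mono (le_iSup W i))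

lemma IsTranslationInvariant.tauSpan_le {W : Submodule ℂ (G → ℂ)} (hW : IsTranslationInvariant W)
    {f : G → ℂ} (hf : f ∈ W) : tauSpan f ≤ W := by
  rw [tauSpan, Submodule.span_le]
  rintro _ ⟨x, rfl⟩
  exact hW x hf

lemma IsTranslationInvariant.isExpPoly_of_mem {W : Submodule ℂ (G → ℂ)} [FiniteDimensional ℂ W]
    (hW : IsTranslationInvariant W) {f : G → ℂ} (hf : f ∈ W) : IsExpPoly f :=
  Submodule.finiteDimensional_of_le (hW.tauSpan_le hf)

lemma IsExpPoly.fwdDiffOp {u : G → ℂ} (hu : IsExpPoly u) (g : G) : IsExpPoly (fwdDiffOp g u) := by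
  have : FiniteDimensional ℂ (tauSpan u) := hu
  rw [← transOp_sub_self]
  exact (isTranslationInvariant_tauSpan u).isExpPoly_of_mem
    (sub_mem (transOp_mem_tauSpan g u) (self_mem_tauSpan u))

def IsTranslationInvariant.periodsMod {W : Submodule ℂ (G → ℂ)} (hW : IsTranslationInvariant W)
    (u : G → ℂ) : AddSubgroup G where
  carrier := {x | transOp x u - u ∈ W}
  zero_mem' := by
    simp only [Set.mem_ofPred_eq, transOp_zero, sub_self, zero_mem]
  add_mem' {a b} ha hb := by
    have hsplit : transOp (a + b) u - u = translation a (transOp b u - u) + (transOp a u - u) := by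
      rw [map_sub, translation_apply, translation_apply, transOp_transOp]
      abel
    change transOp (a + b) u - u ∈ W
    rw [hsplit]
    exact add_mem (Submodule.mem_comap.1 (hW a hb)) ha
  neg_mem' {a} ha := by
    have hsplit : transOp (-a) u - u = -translation (-a) (transOp a u - u) := by
      rw [map_sub, translation_apply, translation_apply, transOp_transOp, neg_add_cancel,
        transOp_zero]
      abel
    change transOp (-a) u - u ∈ W
    rw [hsplit]
    exact neg_mem (Submodule.mem_comap.1 (hW (-a) ha))

theorem isExpPoly_of_forall_isExpPoly_fwdDiffOp {S : Set G} (hS : S.Finite)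
    (hgen : AddSubgroup.closure S = ⊤) {u : G → ℂ} (hu : ∀ g ∈ S, IsExpPoly (fwdDiffOp g u)) :
    IsExpPoly u := by
  have : Finite S := hS.to_subtype
  have : ∀ g : S, FiniteDimensional ℂ (tauSpan (fwdDiffOp (g : G) u)) := fun g => hu g g.2
  set W := ⨆ g : S, tauSpan (fwdDiffOp (g : G) u)
  have hW : IsTranslationInvariant W :=
    IsTranslationInvariant.iSup fun g => isTranslationInvariant_tauSpan _
  have hperiods : ∀ x, transOp x u - u ∈ W := by
    have hS : S ⊆ hW.periodsMod u := fun g hg =>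
      Submodule.mem_iSup_of_mem (⟨g, hg⟩ : S) (self_mem_tauSpan _)
    intro x
    exact (AddSubgroup.closure_le _).2 hS (hgen ▸ AddSubgroup.mem_top x)
  refine Submodule.finiteDimensional_of_le (S₂ := W ⊔ ℂ ∙ u) ?_
  rw [tauSpan, Submodule.span_le]
  rintro _ ⟨x, rfl⟩
  change transOp x u ∈ W ⊔ ℂ ∙ u
  rw [← sub_add_cancel (transOp x u) u]
  exact add_mem (Submodule.mem_sup_left (hperiods x))
    (Submodule.mem_sup_right (Submodule.mem_span_singleton_self u))

end Translation

section MixedDiff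

variable {G M : Type*} [AddCommGroup G] [AddCommGroup M]

lemma fwdDiffOp_comm (a b : G) (f : G → M) :
    fwdDiffOp a (fwdDiffOp b f) = fwdDiffOp b (fwdDiffOp a f) := by
  funext x
  simp only [fwdDiffOp, add_right_comm x b a]
  abel

lemma mixedDiff_fwdDiffOp (L : List G) (g : G) (f : G → M) :
    mixedDiff L (fwdDiffOp g f) = fwdDiffOp g (mixedDiff L f) := by
  induction L with
  | nil => rfl
  | cons a t ih => rw [mixedDiff, ih, fwdDiffOp_comm, mixedDiff]

lemma List.Perm.mixedDiff_eq {l₁ l₂ : List G} (p : l₁.Perm l₂) (f : G → M) :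
    mixedDiff l₁ f = mixedDiff l₂ f := by
  induction p with
  | nil => rfl
  | cons a _ ih => rw [mixedDiff, ih, mixedDiff]
  | swap a b l => exact fwdDiffOp_comm _ _ _
  | trans _ _ ih₁ ih₂ => rw [ih₁, ih₂]

lemma mixedDiff_erase_fwdDiffOp [DecidableEq G] {L : List G} {g : G} (hg : g ∈ L) (f : G → M) :
    mixedDiff (L.erase g) (fwdDiffOp g f) = mixedDiff L f := by
  rw [mixedDiff_fwdDiffOp]
  exact ((List.perm_cons_erase hg).mixedDiff_eq f).symm

end MixedDiff

section EraseStep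

variable {ι α : Type*} [DecidableEq ι] [DecidableEq α]

lemma update_erase_sublist (L : ι → List α) (k : ι) (g : α) (j : ι) :
    (Function.update L k ((L k).erase g) j).Sublist (L j) := by
  rcases eq_or_ne j k with rfl | hj
  · rw [Function.update_self]
    exact List.erase_sublist
  · rw [Function.update_of_ne hj]

lemma sum_length_update_erase_lt [Fintype ι] {L : ι → List α} {k : ι} {g : α} (hg : g ∈ L k) :
    ∑ j, (Function.update L k ((L k).erase g) j).length < ∑ j, (L j).length := by
  refine Finset.sum_lt_sum (fun j _ => (update_erase_sublist L k g j).length_le)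
    ⟨k, Finset.mem_univ k, ?_⟩
  rw [Function.update_self, List.length_erase_of_mem hg]
  exact Nat.sub_lt (List.length_pos_of_mem hg) one_pos

end EraseStep

theorem isExpPoly_of_forall_isExpPoly_mixedDiff {G ι : Type*} [AddCommGroup G] [Fintype ι]
    (L : ι → List G)
    (hgen : ∀ c : ι → G, (∀ j, c j ∈ L j) → AddSubgroup.closure (Set.range c) = ⊤)
    {u : G → ℂ} (hu : ∀ k, IsExpPoly (mixedDiff (L k) u)) : IsExpPoly u := by
  classical
  induction hN : ∑ k, (L k).length using Nat.strong_induction_on generalizing L u with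
  | _ N ih =>
  by_cases hnil : ∃ k, L k = []
  · obtain ⟨k, hk⟩ := hnil
    simpa only [hk, mixedDiff] using hu k
  push Not at hnil
  refine isExpPoly_of_forall_isExpPoly_fwdDiffOp (S := ⋃ k, {g | g ∈ L k})
    (Set.finite_iUnion fun k => (L k).finite_toSet) ?_ ?_
  · have hhead : ∀ j, (L j).head (hnil j) ∈ L j := fun j => List.head_mem (hnil j)
    rw [eq_top_iff, ← hgen _ hhead]
    exact AddSubgroup.closure_mono (Set.range_subset_iff.2 fun j => Set.mem_iUnion.2 ⟨j, hhead j⟩)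
  · intro g hg
    obtain ⟨k, hk⟩ := Set.mem_iUnion.1 hg
    refine ih _ (hN ▸ sum_length_update_erase_lt hk) _
      (fun c hc => hgen c fun j => (update_erase_sublist L k g j).subset (hc j)) ?_ rfl
    intro j
    rcases eq_or_ne j k with rfl | hj
    · rw [Function.update_self, mixedDiff_erase_fwdDiffOp hk]
      exact hu j
    · rw [Function.update_of_ne hj, mixedDiff_fwdDiffOp]
      exact (hu j).fwdDiffOp g

theorem montel_mixed_general {G : Type*} [AddCommGroup G] {n s : ℕ}
    (h : Fin n → Fin s → G)
    (hgen : ∀ idx : Fin s → Fin n,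
      AddSubgroup.closure (Set.range fun j : Fin s => h (idx j) j) = ⊤)
    (f : G → ℂ) (P : Fin s → G → ℂ)
    (hP : ∀ k : Fin s, IsExpPoly (P k))
    (hf : ∀ k : Fin s, mixedDiff (List.ofFn fun i : Fin n => h i k).reverse f = P k) :
    IsExpPoly f := by
  refine isExpPoly_of_forall_isExpPoly_mixedDiff
    (fun k => (List.ofFn fun i : Fin n => h i k).reverse) ?_ fun k => hf k ▸ hP k
  intro c hc
  simp only [List.mem_reverse, List.mem_ofFn] at hc
  choose idx hidx using hc
  obtain rfl : c = fun j => h (idx j) j := funext fun j => (hidx j).symm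
  exact hgen idx

/-- **Montel-type theorem for mixed differences (Theorem 2).**
If for every choice `(i_1, …, i_s) ∈ {1, …, n}^s` the set `{h i_1 1, …, h i_s s}` generates the
commutative group `G`, and `Δ_{h n k} ⋯ Δ_{h 1 k} f = P k` with each `P k` an exponential
polynomial, then `f` is an exponential polynomial. -/
theorem montel_mixed {G : Type*} [AddCommGroup G] {n s : ℕ} (hn : 1 ≤ n) (hs : 1 ≤ s)
    (h : Fin n → Fin s → G)
    (hgen : ∀ idx : Fin s → Fin n,
      AddSubgroup.closure (Set.range fun j : Fin s => h (idx j) j) = ⊤)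
    (f : G → ℂ) (P : Fin s → G → ℂ)
    (hP : ∀ k : Fin s, IsExpPoly (P k))
    (hf : ∀ k : Fin s, mixedDiff (List.ofFn fun i : Fin n => h i k).reverse f = P k) :
    IsExpPoly f :=
  montel_mixed_general h hgen f P hP hf
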